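/- arXiv:2008.01276 — 3 statements merged into one kernel-verified Lean document; each statement's English description precedes it below -/
import Mathlib

section
/- Under the kink assumptions, the transformed potential V(φ) = (W'(φ))²/W(φ) − W''(φ) extends continuously to the closed interval [ζ₋, ζ₊] with V(ζ₋) = W''(ζ₋) and V(ζ₊) = W''(ζ₊). -/
/-!
At a nondegenerate zero `ζ` of `W` (`W ζ = W' ζ = 0`, `W'' ζ ≠ 0`) both `(W')²` and `W` vanish,
and L'Hôpital's rule gives `(W')² / W → 2 W' W'' / W' = 2 W''(ζ)`; the derivative quotient is
legitimate because `W'` has nonzero derivative at `ζ`, hence no other zeros nearby. So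
`V = (W')² / W - W''` tends to `W''(ζ)` at both endpoints of the interval.
-/

open Filter Set Topology

noncomputable def transformedPotential (W : ℝ → ℝ) (φ : ℝ) : ℝ :=
  deriv W φ ^ 2 / W φ - iteratedDeriv 2 W φ

section

variable {f : ℝ → ℝ} {a : ℝ}

theorem ContDiff.continuousOn_transformedPotential {s : Set ℝ} (hf : ContDiff ℝ 2 f)
    (hs : ∀ x ∈ s, f x ≠ 0) : ContinuousOn (transformedPotential f) s := by
  have hf' : Continuous (deriv f) := hf.continuous_deriv (by norm_num)
  exact ((hf'.pow 2).continuousOn.div hf.continuous.continuousOn hs).sub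
    (hf.continuous_iteratedDeriv 2 le_rfl).continuousOn

theorem tendsto_sq_deriv_div_nhdsNE (hf : ContDiff ℝ 2 f) (h₀ : f a = 0)
    (h₁ : deriv f a = 0) (h₂ : iteratedDeriv 2 f a ≠ 0) :
    Tendsto (fun x ↦ deriv f x ^ 2 / f x) (𝓝[≠] a) (𝓝 (2 * iteratedDeriv 2 f a)) := by
  have hd : Differentiable ℝ f := hf.differentiable (by norm_num)
  have hd' : Differentiable ℝ (deriv f) := by
    simpa using hf.differentiable_iteratedDeriv 1 (by norm_num)
  have hc'' : Continuous (iteratedDeriv 2 f) := hf.continuous_iteratedDeriv 2 le_rfl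
  have hderiv' : ∀ x, HasDerivAt (deriv f) (iteratedDeriv 2 f x) x := fun x ↦ by
    simpa [iteratedDeriv_succ] using (hd' x).hasDerivAt
  have hne : ∀ᶠ x in 𝓝[≠] a, deriv f x ≠ 0 := (hderiv' a).eventually_ne h₂
  have hnum : Tendsto (fun x ↦ deriv f x ^ 2) (𝓝[≠] a) (𝓝 0) := by
    simpa [h₁] using ((hd'.continuous.tendsto a).pow 2).mono_left nhdsWithin_le_nhds
  have hden : Tendsto f (𝓝[≠] a) (𝓝 0) := by
    simpa [h₀] using (hd.continuous.tendsto a).mono_left nhdsWithin_le_nhds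
  have hratio : Tendsto (fun x ↦ 2 * deriv f x * iteratedDeriv 2 f x / deriv f x) (𝓝[≠] a)
      (𝓝 (2 * iteratedDeriv 2 f a)) := by
    refine (((hc''.tendsto a).const_mul 2).mono_left nhdsWithin_le_nhds).congr' ?_
    filter_upwards [hne] with x hx
    field_simp
  refine HasDerivAt.lhopital_zero_nhdsNE (.of_forall fun x ↦ ?_)
    (.of_forall fun x ↦ (hd x).hasDerivAt) hne hnum hden hratio
  simpa [mul_comm, mul_left_comm] using (hderiv' x).fun_pow 2

theorem tendsto_transformedPotential_nhdsNE (hf : ContDiff ℝ 2 f) (h₀ : f a = 0)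
    (h₁ : deriv f a = 0) (h₂ : iteratedDeriv 2 f a ≠ 0) :
    Tendsto (transformedPotential f) (𝓝[≠] a) (𝓝 (iteratedDeriv 2 f a)) := by
  have h := (tendsto_sq_deriv_div_nhdsNE hf h₀ h₁ h₂).sub
    (((hf.continuous_iteratedDeriv 2 le_rfl).tendsto a).mono_left nhdsWithin_le_nhds)
  rwa [two_mul, add_sub_cancel_right] at h

end

theorem V_extends_continuously_general (W : ℝ → ℝ) (ζm ζp : ℝ)
    (hW3 : ContDiff ℝ 3 W)
    (hlt : ζm < ζp) (hWm : W ζm = 0) (hWp : W ζp = 0)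
    (hW'm : deriv W ζm = 0) (hW'p : deriv W ζp = 0)
    (hW''m : 0 < iteratedDeriv 2 W ζm) (hW''p : 0 < iteratedDeriv 2 W ζp)
    (hWpos : ∀ φ ∈ Ioo ζm ζp, 0 < W φ) :
    ∃ Vbar : ℝ → ℝ, ContinuousOn Vbar (Icc ζm ζp) ∧
      (∀ φ ∈ Ioo ζm ζp, Vbar φ = (deriv W φ) ^ 2 / W φ - iteratedDeriv 2 W φ) ∧
      Vbar ζm = iteratedDeriv 2 W ζm ∧ Vbar ζp = iteratedDeriv 2 W ζp := by
  have hW2 : ContDiff ℝ 2 W := hW3.of_le (by norm_num)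
  have hcont : ContinuousOn (transformedPotential W) (Ioo ζm ζp) :=
    hW2.continuousOn_transformedPotential fun φ hφ ↦ (hWpos φ hφ).ne'
  have hm := (tendsto_transformedPotential_nhdsNE hW2 hWm hW'm hW''m.ne').mono_left
    (nhdsGT_le_nhdsNE ζm)
  have hp := (tendsto_transformedPotential_nhdsNE hW2 hWp hW'p hW''p.ne').mono_left
    (nhdsLT_le_nhdsNE ζp)
  exact ⟨extendFrom (Ioo ζm ζp) (transformedPotential W),
    continuousOn_Icc_extendFrom_Ioo hcont hm hp, extendFrom_extends hcont,
    eq_lim_at_left_extendFrom_Ioo hlt hm, eq_lim_at_right_extendFrom_Ioo hlt hp⟩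

theorem V_extends_continuously (W : ℝ → ℝ) (ζm ζp : ℝ)
    (hW3 : ContDiff ℝ 3 W) (hWnn : ∀ φ, 0 ≤ W φ)
    (hlt : ζm < ζp) (hWm : W ζm = 0) (hWp : W ζp = 0)
    (hW'm : deriv W ζm = 0) (hW'p : deriv W ζp = 0)
    (hW''m : 0 < iteratedDeriv 2 W ζm) (hW''p : 0 < iteratedDeriv 2 W ζp)
    (hWpos : ∀ φ ∈ Ioo ζm ζp, 0 < W φ) :
    ∃ Vbar : ℝ → ℝ, ContinuousOn Vbar (Icc ζm ζp) ∧
      (∀ φ ∈ Ioo ζm ζp, Vbar φ = (deriv W φ) ^ 2 / W φ - iteratedDeriv 2 W φ) ∧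
      Vbar ζm = iteratedDeriv 2 W ζm ∧ Vbar ζp = iteratedDeriv 2 W ζp :=
  V_extends_continuously_general W ζm ζp hW3 hlt hWm hWp hW'm hW'p hW''m hW''p hWpos
end

section
/- Let W : (0, 2π) → (0, ∞) be C³ with W(φ) → 0 and W''(φ) → 1 as φ → 0⁺, and suppose the transformed potential V = (W')²/W − W'' is identically equal to 1 on (0, 2π), with W extending to a C³ function on a neighborhood of [0,2π] vanishing at 0 and 2π. Then W(φ) = 1 − cos φ for all φ ∈ [0, 2π]. -/
open Real Filter Set

/-!
Writing `V = 1` as `W'' = W'²/W - 1`, one integration gives `W'² = C W² + 2W`, hence the linear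
equation `W'' = C W + 1`, and both identities extend to the closed interval by continuity. At `0`
the first integral gives `W'(0) = 0`, and at an interior critical point (Rolle) it gives `C < 0`.
Writing `C = -k²`, uniqueness for the harmonic oscillator yields `W = (1 - cos kφ)/k²`, and the
first positive zero of this function is `2π/k`, so `k = 1`.
-/

variable {W W' W'' : ℝ → ℝ} {a b C k : ℝ}

/-- Since `(log W)'' = -1/W`, the quantity `(W'² - 2W)/W²` has zero derivative. -/
theorem exists_sq_deriv_eq_of_deriv_deriv_eq {U : Set ℝ} (hU : IsOpen U) (hU' : IsPreconnected U)
    (hpos : ∀ x ∈ U, 0 < W x) (hW : ∀ x ∈ U, HasDerivAt W (W' x) x)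
    (hW' : ∀ x ∈ U, HasDerivAt W' (W'' x) x) (hV : ∀ x ∈ U, W'' x = W' x ^ 2 / W x - 1) :
    ∃ C, ∀ x ∈ U, W' x ^ 2 = C * W x ^ 2 + 2 * W x := by
  have hE : ∀ x ∈ U, HasDerivAt (fun y => (W' y ^ 2 - 2 * W y) / W y ^ 2) 0 x := by
    intro x hx
    have hWx := hpos x hx
    refine ((((hW' x hx).pow 2).sub ((hW x hx).const_mul 2)).div ((hW x hx).pow 2)
      (pow_ne_zero 2 hWx.ne')).congr_deriv ?_
    simp only [Pi.sub_apply, Pi.pow_apply]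
    rw [hV x hx]
    field_simp
    ring
  obtain ⟨C, hC⟩ := hU.exists_is_const_of_deriv_eq_zero hU'
    (fun x hx => (hE x hx).differentiableAt.differentiableWithinAt) (fun x hx => (hE x hx).deriv)
  refine ⟨C, fun x hx => ?_⟩
  have hWx := hpos x hx
  have hCx := hC x hx
  field_simp at hCx
  linarith

theorem exists_sq_deriv_eq_and_deriv_deriv_eq_on_Icc (hab : a < b)
    (hpos : ∀ x ∈ Ioo a b, 0 < W x) (hW : ∀ x ∈ Icc a b, HasDerivAt W (W' x) x)
    (hW' : ∀ x ∈ Icc a b, HasDerivAt W' (W'' x) x) (hW''c : ContinuousOn W'' (Icc a b))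
    (hV : ∀ x ∈ Ioo a b, W'' x = W' x ^ 2 / W x - 1) :
    ∃ C, ∀ x ∈ Icc a b, W' x ^ 2 = C * W x ^ 2 + 2 * W x ∧ W'' x = C * W x + 1 := by
  have hIoo : Ioo a b ⊆ Icc a b := Ioo_subset_Icc_self
  obtain ⟨C, hC⟩ := exists_sq_deriv_eq_of_deriv_deriv_eq isOpen_Ioo isPreconnected_Ioo hpos
    (fun x hx => hW x (hIoo hx)) (fun x hx => hW' x (hIoo hx)) hV
  have hWc : ContinuousOn W (Icc a b) := fun x hx => (hW x hx).continuousAt.continuousWithinAt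
  have hW'c : ContinuousOn W' (Icc a b) := fun x hx => (hW' x hx).continuousAt.continuousWithinAt
  have hclosure : Icc a b ⊆ closure (Ioo a b) := (closure_Ioo hab.ne).symm.subset
  have hfirst : EqOn (fun x => W' x ^ 2) (fun x => C * W x ^ 2 + 2 * W x) (Icc a b) :=
    EqOn.of_subset_closure hC (hW'c.pow 2) (by fun_prop) hIoo hclosure
  have hode : EqOn W'' (fun x => C * W x + 1) (Icc a b) := by
    refine EqOn.of_subset_closure (fun x hx => ?_) hW''c (by fun_prop) hIoo hclosure
    have hWx := hpos x hx
    rw [hV x hx, hC x hx]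
    field_simp
    ring
  exact ⟨C, fun x hx => ⟨hfirst hx, hode hx⟩⟩

/-- Rolle's theorem gives an interior zero of `W'`, where the first integral forces `C W = -2`. -/
theorem neg_of_sq_deriv_eq (hab : a < b) (ha : W a = 0) (hb : W b = 0)
    (hpos : ∀ x ∈ Ioo a b, 0 < W x) (hW : ∀ x ∈ Icc a b, HasDerivAt W (W' x) x)
    (hC : ∀ x ∈ Ioo a b, W' x ^ 2 = C * W x ^ 2 + 2 * W x) : C < 0 := by
  obtain ⟨c, hc, hW'c⟩ := exists_hasDerivAt_eq_zero hab
    (fun x hx => (hW x hx).continuousAt.continuousWithinAt) (ha.trans hb.symm)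
    (fun x hx => hW x (Ioo_subset_Icc_self hx))
  have hWc := hpos c hc
  have hCc := hC c hc
  rw [hW'c] at hCc
  nlinarith

/-- The energy `D'² + k² D²` is conserved. -/
theorem eq_zero_of_deriv_deriv_eq_neg_sq_mul {D D' D'' : ℝ → ℝ} (hk : k ≠ 0)
    (hD : ∀ x ∈ Icc a b, HasDerivAt D (D' x) x) (hD' : ∀ x ∈ Icc a b, HasDerivAt D' (D'' x) x)
    (hode : ∀ x ∈ Icc a b, D'' x = -(k ^ 2 * D x)) (ha : D a = 0) (ha' : D' a = 0) :
    ∀ x ∈ Icc a b, D x = 0 := by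
  have hE : ∀ x ∈ Icc a b, HasDerivAt (fun y => D' y ^ 2 + k ^ 2 * D y ^ 2) 0 x := by
    intro x hx
    refine (((hD' x hx).pow 2).add (((hD x hx).pow 2).const_mul (k ^ 2))).congr_deriv ?_
    rw [hode x hx]
    ring
  intro x hx
  have hEx := constant_of_has_deriv_right_zero
    (fun y hy => (hE y hy).continuousAt.continuousWithinAt)
    (fun y hy => (hE y (Ico_subset_Icc_self hy)).hasDerivWithinAt) x hx
  simp only [ha, ha'] at hEx
  have hk2 : 0 < k ^ 2 := by positivity
  have hDx : D x ^ 2 = 0 := by nlinarith [sq_nonneg (D' x), sq_nonneg (D x)]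
  exact pow_eq_zero_iff two_ne_zero |>.mp hDx

theorem eq_one_sub_cos_div_sq_of_deriv_deriv_eq (hk : k ≠ 0)
    (hW : ∀ x ∈ Icc 0 b, HasDerivAt W (W' x) x) (hW' : ∀ x ∈ Icc 0 b, HasDerivAt W' (W'' x) x)
    (hode : ∀ x ∈ Icc 0 b, W'' x = 1 - k ^ 2 * W x) (h0 : W 0 = 0) (h0' : W' 0 = 0) :
    ∀ x ∈ Icc 0 b, W x = (1 - cos (k * x)) / k ^ 2 := by
  have hS : ∀ x, HasDerivAt (fun y => (1 - cos (k * y)) / k ^ 2) (sin (k * x) / k) x := by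
    intro x
    have h := ((((hasDerivAt_id x).const_mul k).cos).const_sub 1).div_const (k ^ 2)
    simp only [id, mul_one] at h
    exact h.congr_deriv (by field_simp)
  have hS' : ∀ x, HasDerivAt (fun y => sin (k * y) / k) (cos (k * x)) x := by
    intro x
    have h := (((hasDerivAt_id x).const_mul k).sin).div_const k
    simp only [id, mul_one] at h
    exact h.congr_deriv (by field_simp)
  intro x hx
  have hD := eq_zero_of_deriv_deriv_eq_neg_sq_mul (D := fun y => W y - (1 - cos (k * y)) / k ^ 2)
    hk (fun y hy => (hW y hy).sub (hS y)) (fun y hy => (hW' y hy).sub (hS' y))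
    (fun y hy => by rw [hode y hy]; field_simp; ring) (by simp [h0]) (by simp [h0']) x hx
  exact sub_eq_zero.mp hD

theorem eq_one_of_cos_mul_two_pi_eq_one (hk : 0 < k) (h2π : cos (k * (2 * π)) = 1)
    (hpos : ∀ x ∈ Ioo 0 (2 * π), cos (k * x) ≠ 1) : k = 1 := by
  rcases lt_trichotomy k 1 with hlt | heq | hgt
  · have := (cos_eq_one_iff_of_lt_of_lt (by nlinarith [pi_pos]) (by nlinarith [pi_pos])).mp h2π
    nlinarith [pi_pos]
  · exact heq
  · refine absurd ?_ (hpos (2 * π / k) ⟨by positivity, ?_⟩)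
    · rw [mul_div_cancel₀ _ hk.ne', cos_two_pi]
    · rw [div_lt_iff₀ hk]
      nlinarith [pi_pos]

theorem constant_V_implies_sineGordon_general (W : ℝ → ℝ)
    (hW3 : ∃ s : Set ℝ, IsOpen s ∧ Icc (0 : ℝ) (2 * π) ⊆ s ∧ ContDiffOn ℝ 3 W s)
    (hW0 : W 0 = 0) (hW2π : W (2 * π) = 0)
    (hWpos : ∀ φ ∈ Ioo (0 : ℝ) (2 * π), 0 < W φ)
    (hV : ∀ φ ∈ Ioo (0 : ℝ) (2 * π),
      (deriv W φ) ^ 2 / W φ - iteratedDeriv 2 W φ = 1) :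
    ∀ φ ∈ Icc (0 : ℝ) (2 * π), W φ = 1 - Real.cos φ := by
  obtain ⟨s, hs, hIcc, hW⟩ := hW3
  have hW' : ContDiffOn ℝ 2 (deriv W) s := hW.deriv_of_isOpen hs (by norm_num)
  have hW'' : ContDiffOn ℝ 1 (deriv (deriv W)) s := hW'.deriv_of_isOpen hs (by norm_num)
  have hd : ∀ x ∈ Icc 0 (2 * π), HasDerivAt W (deriv W x) x := fun x hx =>
    ((hW.differentiableOn (by norm_num)).differentiableAt (hs.mem_nhds (hIcc hx))).hasDerivAt
  have hd2 : ∀ x ∈ Icc 0 (2 * π), HasDerivAt (deriv W) (deriv (deriv W) x) x := fun x hx =>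
    ((hW'.differentiableOn (by norm_num)).differentiableAt (hs.mem_nhds (hIcc hx))).hasDerivAt
  rw [iteratedDeriv_succ, iteratedDeriv_one] at hV
  obtain ⟨C, hC⟩ := exists_sq_deriv_eq_and_deriv_deriv_eq_on_Icc two_pi_pos hWpos hd hd2
    (hW''.continuousOn.mono hIcc) fun x hx => by linarith [hV x hx]
  have hCneg : C < 0 := neg_of_sq_deriv_eq two_pi_pos hW0 hW2π hWpos hd
    fun x hx => (hC x (Ioo_subset_Icc_self hx)).1
  have hW'0 : deriv W 0 = 0 := by simpa [hW0] using (hC 0 ⟨le_rfl, two_pi_pos.le⟩).1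
  obtain ⟨k, hk, rfl⟩ : ∃ k : ℝ, 0 < k ∧ C = -k ^ 2 :=
    ⟨√(-C), sqrt_pos.2 (neg_pos.2 hCneg), by rw [sq_sqrt (by linarith)]; ring⟩
  have hsol := eq_one_sub_cos_div_sq_of_deriv_deriv_eq hk.ne' hd hd2
    (fun x hx => by rw [(hC x hx).2]; ring) hW0 hW'0
  have hk1 : k = 1 := by
    refine eq_one_of_cos_mul_two_pi_eq_one hk ?_ fun x hx h1 => ?_
    · have h := hsol (2 * π) ⟨two_pi_pos.le, le_rfl⟩
      rw [hW2π, eq_comm, div_eq_zero_iff] at h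
      exact (sub_eq_zero.mp (h.resolve_right (pow_ne_zero 2 hk.ne'))).symm
    · have h := hWpos x hx
      rw [hsol x (Ioo_subset_Icc_self hx), h1] at h
      simp at h
  intro φ hφ
  simp [hsol φ hφ, hk1]

theorem constant_V_implies_sineGordon (W : ℝ → ℝ)
    (hW3 : ∃ s : Set ℝ, IsOpen s ∧ Icc (0 : ℝ) (2 * π) ⊆ s ∧ ContDiffOn ℝ 3 W s)
    (hW0 : W 0 = 0) (hW2π : W (2 * π) = 0)
    (hWpos : ∀ φ ∈ Ioo (0 : ℝ) (2 * π), 0 < W φ)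
    (hWlim : Tendsto W (nhdsWithin 0 (Ioi 0)) (nhds 0))
    (hW''lim : Tendsto (iteratedDeriv 2 W) (nhdsWithin 0 (Ioi 0)) (nhds 1))
    (hnorm : Tendsto (fun φ => 2 * W φ / φ ^ 2) (nhdsWithin 0 (Ioi 0)) (nhds 1))
    (hV : ∀ φ ∈ Ioo (0 : ℝ) (2 * π),
      (deriv W φ) ^ 2 / W φ - iteratedDeriv 2 W φ = 1) :
    ∀ φ ∈ Icc (0 : ℝ) (2 * π), W φ = 1 - Real.cos φ :=
  constant_V_implies_sineGordon_general W hW3 hW0 hW2π hWpos hV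
end

section
/- Let n ≥ 2 and 0 < m₁ < m₂ < ⋯ < mₙ with mⱼ₊₁ ≥ λⱼ mⱼ for constants λⱼ > 1 defined recursively by c₂ > 0 (depending on λ₁ > √5), λⱼ = √((cⱼ+8)/cⱼ), cⱼ₊₁ = min(1, cⱼ/2). Then with U_{4n}(φ; m) = Σ_{k=1}^n Π_{j≠k}(φ²−mⱼ²)² + 2Σ_{k≠j}(φ²+m_k²)(φ²−mⱼ²)Π_{l≠k,l≠j}(φ²−m_l²)² and R_{4n}(φ; m) = Σ_{k=1}^n Π_{j≠k}(φ²−mⱼ²)², one has U_{4n}(φ; m) ≥ cₙ R_{4n}(φ; m) for all φ ≥ 0. -/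
open Real Finset

/-- `R_{4n}(φ; m) = Σ_{k=1}^n Π_{j≠k} (φ²−mⱼ²)²`. -/
noncomputable def R4n (n : ℕ) (m : ℕ → ℝ) (φ : ℝ) : ℝ :=
  ∑ k ∈ Finset.Icc 1 n, ∏ j ∈ (Finset.Icc 1 n).erase k, (φ ^ 2 - m j ^ 2) ^ 2

/-- `U_{4n}(φ; m) = Σ_k Π_{j≠k}(φ²−mⱼ²)²
  + 2 Σ_{k≠j} (φ²+m_k²)(φ²−mⱼ²) Π_{l≠k,j}(φ²−m_l²)²`. -/
noncomputable def U4n (n : ℕ) (m : ℕ → ℝ) (φ : ℝ) : ℝ :=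
  R4n n m φ
    + 2 * ∑ k ∈ Finset.Icc 1 n, ∑ j ∈ (Finset.Icc 1 n).erase k,
        (φ ^ 2 + m k ^ 2) * (φ ^ 2 - m j ^ 2) *
          ∏ l ∈ ((Finset.Icc 1 n).erase k).erase j, (φ ^ 2 - m l ^ 2) ^ 2

namespace Phi4nAux

lemma icc_succ (n : ℕ) : Finset.Icc 1 (n+1) = insert (n+1) (Finset.Icc 1 n) :=
  (Finset.insert_Icc_right_eq_Icc_add_one (by omega)).symm

lemma nu_notmem (n : ℕ) : (n+1) ∉ Finset.Icc 1 n := by simp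

/-- single-sum recursion helper -/
lemma sum_prod_rec (S : Finset ℕ) (ν : ℕ) (hν : ν ∉ S) (f : ℕ → ℝ) :
    ∑ k ∈ insert ν S, ∏ j ∈ (insert ν S).erase k, f j
      = (∏ j ∈ S, f j) + f ν * ∑ k ∈ S, ∏ j ∈ S.erase k, f j := by
  rw [Finset.sum_insert hν, Finset.erase_insert hν, Finset.mul_sum]
  congr 1
  refine Finset.sum_congr rfl fun k hk => ?_
  have hkν : k ≠ ν := fun h => hν (h ▸ hk)
  rw [Finset.erase_insert_of_ne (Ne.symm hkν),
    Finset.prod_insert (fun h => hν (Finset.mem_of_mem_erase h))]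

lemma R4n_rec (n : ℕ) (m : ℕ → ℝ) (φ : ℝ) :
    R4n (n+1) m φ
      = (φ ^ 2 - m (n+1) ^ 2) ^ 2 * R4n n m φ
        + ∏ j ∈ Finset.Icc 1 n, (φ ^ 2 - m j ^ 2) ^ 2 := by
  unfold R4n
  rw [icc_succ n, sum_prod_rec _ _ (nu_notmem n)]
  ring

/-- double-sum recursion helper -/
lemma double_sum_rec (S : Finset ℕ) (ν : ℕ) (hν : ν ∉ S) (A B f : ℕ → ℝ) :
    ∑ k ∈ insert ν S, ∑ j ∈ (insert ν S).erase k,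
        A k * B j * ∏ l ∈ ((insert ν S).erase k).erase j, f l
      = (∑ j ∈ S, A ν * B j * ∏ l ∈ S.erase j, f l)
        + (∑ k ∈ S, A k * B ν * ∏ l ∈ S.erase k, f l)
        + f ν * ∑ k ∈ S, ∑ j ∈ S.erase k,
            A k * B j * ∏ l ∈ (S.erase k).erase j, f l := by
  rw [Finset.sum_insert hν, Finset.erase_insert hν]
  have h2 : ∀ k ∈ S,
      (∑ j ∈ (insert ν S).erase k,
          A k * B j * ∏ l ∈ ((insert ν S).erase k).erase j, f l)
        = A k * B ν * ∏ l ∈ S.erase k, f l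
          + f ν * ∑ j ∈ S.erase k, A k * B j * ∏ l ∈ (S.erase k).erase j, f l := by
    intro k hk
    have hkν : ν ≠ k := fun h => hν (h ▸ hk)
    have hν' : ν ∉ S.erase k := fun h => hν (Finset.mem_of_mem_erase h)
    rw [Finset.erase_insert_of_ne hkν, Finset.sum_insert hν',
      Finset.erase_insert hν', Finset.mul_sum]
    congr 1
    refine Finset.sum_congr rfl fun j hj => ?_
    have hjν : j ≠ ν := fun h => hν' (h ▸ hj)
    rw [Finset.erase_insert_of_ne (Ne.symm hjν),
      Finset.prod_insert (fun h => hν' (Finset.mem_of_mem_erase h))]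
    ring
  rw [Finset.sum_congr rfl h2, Finset.sum_add_distrib, ← Finset.mul_sum]
  ring

end Phi4nAux

namespace Phi4nAux

lemma U4n_rec (n : ℕ) (m : ℕ → ℝ) (φ : ℝ) :
    U4n (n+1) m φ
      = (φ ^ 2 - m (n+1) ^ 2) ^ 2 * U4n n m φ
        + (∏ j ∈ Finset.Icc 1 n, (φ ^ 2 - m j ^ 2) ^ 2)
        + 4 * ∑ k ∈ Finset.Icc 1 n,
            ((φ ^ 2) ^ 2 - m (n+1) ^ 2 * m k ^ 2) *
              ∏ l ∈ (Finset.Icc 1 n).erase k, (φ ^ 2 - m l ^ 2) ^ 2 := by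
  unfold U4n
  rw [R4n_rec, icc_succ n,
    double_sum_rec _ _ (nu_notmem n) (fun k => φ ^ 2 + m k ^ 2)
      (fun j => φ ^ 2 - m j ^ 2) (fun l => (φ ^ 2 - m l ^ 2) ^ 2)]
  have hcomb :
      ((∑ j ∈ Finset.Icc 1 n, (φ ^ 2 + m (n+1) ^ 2) * (φ ^ 2 - m j ^ 2) *
          ∏ l ∈ (Finset.Icc 1 n).erase j, (φ ^ 2 - m l ^ 2) ^ 2)
        + ∑ k ∈ Finset.Icc 1 n, (φ ^ 2 + m k ^ 2) * (φ ^ 2 - m (n+1) ^ 2) *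
            ∏ l ∈ (Finset.Icc 1 n).erase k, (φ ^ 2 - m l ^ 2) ^ 2)
      = 2 * ∑ k ∈ Finset.Icc 1 n,
          ((φ ^ 2) ^ 2 - m (n+1) ^ 2 * m k ^ 2) *
            ∏ l ∈ (Finset.Icc 1 n).erase k, (φ ^ 2 - m l ^ 2) ^ 2 := by
    rw [← Finset.sum_add_distrib, Finset.mul_sum]
    exact Finset.sum_congr rfl fun k _ => by ring
  linear_combination 2 * hcomb

end Phi4nAux

namespace Phi4nAux

noncomputable def cseq (j : ℕ) : ℝ := (1/2 : ℝ) ^ (j - 1)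

noncomputable def lamseq (j : ℕ) : ℝ :=
  if j ≤ 1 then 3 else Real.sqrt ((cseq j + 8) / cseq j)

lemma cseq_pos (j : ℕ) : 0 < cseq j := pow_pos (by norm_num) _

lemma cseq_le_half {j : ℕ} (hj : 2 ≤ j) : cseq j ≤ 1/2 := by
  unfold cseq
  calc ((1:ℝ)/2) ^ (j-1) ≤ (1/2) ^ 1 :=
        pow_le_pow_of_le_one (by norm_num) (by norm_num) (by omega)
    _ = 1/2 := pow_one _

lemma cseq_succ {j : ℕ} (hj : 1 ≤ j) : cseq (j+1) = cseq j / 2 := by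
  unfold cseq
  have : j + 1 - 1 = (j - 1) + 1 := by omega
  rw [this, pow_succ]
  ring

lemma cseq_rec {j : ℕ} (hj : 2 ≤ j) : cseq (j+1) = min 1 (cseq j / 2) := by
  rw [cseq_succ (by omega), min_eq_right]
  have := cseq_le_half hj
  linarith

lemma lamseq_one : lamseq 1 = 3 := by simp [lamseq]

lemma lamseq_ge_two {j : ℕ} (hj : 2 ≤ j) :
    lamseq j = Real.sqrt ((cseq j + 8) / cseq j) := by
  rw [lamseq, if_neg (by omega)]

lemma sqrt5_lt_lam1 : Real.sqrt 5 < lamseq 1 := by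
  rw [lamseq_one]
  rw [show (3:ℝ) = Real.sqrt 9 by
    rw [show (9:ℝ) = 3^2 by norm_num, Real.sqrt_sq (by norm_num)]]
  exact Real.sqrt_lt_sqrt (by norm_num) (by norm_num)

lemma one_lt_lamseq {j : ℕ} (hj : 1 ≤ j) : 1 < lamseq j := by
  rcases Nat.lt_or_ge j 2 with h | h
  · have : j = 1 := by omega
    rw [this, lamseq_one]; norm_num
  · rw [lamseq_ge_two h]
    have hc := cseq_pos j
    have h1 : (1:ℝ) < (cseq j + 8) / cseq j := by
      rw [lt_div_iff₀ hc]; linarith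
    calc (1:ℝ) = Real.sqrt 1 := Real.sqrt_one.symm
      _ < _ := Real.sqrt_lt_sqrt (by norm_num) h1

lemma prod_sq_nonneg (S : Finset ℕ) (m : ℕ → ℝ) (φ : ℝ) :
    0 ≤ ∏ j ∈ S, (φ ^ 2 - m j ^ 2) ^ 2 :=
  Finset.prod_nonneg fun j _ => sq_nonneg _

lemma R4n_nonneg (n : ℕ) (m : ℕ → ℝ) (φ : ℝ) : 0 ≤ R4n n m φ :=
  Finset.sum_nonneg fun k _ => prod_sq_nonneg _ _ _

lemma base_case (m : ℕ → ℝ) (φ : ℝ) (hm1 : 0 < m 1) (hsep : 3 * m 1 ≤ m 2)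
    (hφ : 0 ≤ φ) : cseq 2 * R4n 2 m φ ≤ U4n 2 m φ := by
  have hR : R4n 2 m φ = (φ ^ 2 - m 2 ^ 2) ^ 2 + (φ ^ 2 - m 1 ^ 2) ^ 2 := by
    have h : Finset.Icc 1 2 = {1, 2} := rfl
    have e1 : ({1, 2} : Finset ℕ).erase 1 = {2} := rfl
    have e2 : ({1, 2} : Finset ℕ).erase 2 = {1} := rfl
    simp [R4n, h, e1, e2]
  have hU : U4n 2 m φ = R4n 2 m φ
      + 2 * ((φ ^ 2 + m 1 ^ 2) * (φ ^ 2 - m 2 ^ 2)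
            + (φ ^ 2 + m 2 ^ 2) * (φ ^ 2 - m 1 ^ 2)) := by
    have h : Finset.Icc 1 2 = {1, 2} := rfl
    have e1 : ({1, 2} : Finset ℕ).erase 1 = {2} := rfl
    have e2 : ({1, 2} : Finset ℕ).erase 2 = {1} := rfl
    have e3 : ({2} : Finset ℕ).erase 2 = ∅ := rfl
    have e4 : ({1} : Finset ℕ).erase 1 = ∅ := rfl
    simp [U4n, h, e1, e2, e3, e4]
  have h9 : 9 * m 1 ^ 2 ≤ m 2 ^ 2 := by nlinarith
  have hc2 : cseq 2 = 1/2 := by norm_num [cseq]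
  rw [hR, hU, hR, hc2]
  nlinarith [sq_nonneg (10 * φ ^ 2 - m 1 ^ 2 - m 2 ^ 2),
    mul_nonneg (by linarith : (0:ℝ) ≤ m 2 ^ 2 - 9 * m 1 ^ 2)
      (by nlinarith : (0:ℝ) ≤ 9 * m 2 ^ 2 - m 1 ^ 2),
    sq_nonneg φ, sq_nonneg (m 1), sq_nonneg (m 2)]

end Phi4nAux

namespace Phi4nAux

lemma main_ineq : ∀ n, 2 ≤ n → ∀ m : ℕ → ℝ,
    0 < m 1 →
    (∀ j, 1 ≤ j → j < n → m j < m (j + 1)) →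
    (∀ j, 1 ≤ j → j < n → lamseq j * m j ≤ m (j + 1)) →
    ∀ φ : ℝ, 0 ≤ φ → cseq n * R4n n m φ ≤ U4n n m φ := by
  refine Nat.le_induction ?_ ?_
  · -- base case n = 2
    intro m hm1 _hmono hsep φ hφ
    have h := hsep 1 le_rfl (by norm_num)
    rw [lamseq_one] at h
    exact base_case m φ hm1 h hφ
  · -- inductive step
    intro n hn IH m hm1 hmono hsep φ hφ
    -- monotonicity facts
    have hmono' : ∀ d j, 1 ≤ j → j + d ≤ n + 1 → m j ≤ m (j + d) := by
      intro d
      induction d with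
      | zero => intro j _ _; exact le_rfl
      | succ d ih =>
        intro j hj hjd
        have h1 : m j ≤ m (j + d) := ih j hj (by omega)
        have h2 : m (j + d) < m (j + d + 1) := hmono (j + d) (by omega) (by omega)
        have : j + (d + 1) = (j + d) + 1 := by omega
        rw [this]; linarith
    have hmpos : ∀ k, 1 ≤ k → k ≤ n + 1 → 0 < m k := by
      intro k hk hk'
      have := hmono' (k - 1) 1 le_rfl (by omega)
      have h1k : 1 + (k - 1) = k := by omega
      rw [h1k] at this
      linarith
    have hmlen : ∀ k, 1 ≤ k → k ≤ n → m k ≤ m n := by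
      intro k hk hk'
      have := hmono' (n - k) k hk (by omega)
      have h1k : k + (n - k) = n := by omega
      rwa [h1k] at this
    -- induction hypothesis applies to m
    have hIH : cseq n * R4n n m φ ≤ U4n n m φ :=
      IH m hm1 (fun j hj hjn => hmono j hj (by omega))
        (fun j hj hjn => hsep j hj (by omega)) φ hφ
    -- separation at the top level
    have hc := cseq_pos n
    have hkey : (cseq n + 8) * m n ^ 2 ≤ cseq n * m (n+1) ^ 2 := by
      have hs := hsep n (by omega) (by omega)
      rw [lamseq_ge_two hn] at hs
      have hmn : 0 < m n := hmpos n (by omega) (by omega)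
      have hnn : 0 ≤ Real.sqrt ((cseq n + 8) / cseq n) * m n :=
        mul_nonneg (Real.sqrt_nonneg _) hmn.le
      have harg : (0:ℝ) ≤ (cseq n + 8) / cseq n := by positivity
      have h2 : (Real.sqrt ((cseq n + 8) / cseq n) * m n) ^ 2 ≤ m (n+1) ^ 2 :=
        pow_le_pow_left₀ hnn hs 2
      have h3 : (Real.sqrt ((cseq n + 8) / cseq n) * m n) ^ 2
          = (cseq n + 8) / cseq n * m n ^ 2 := by
        rw [mul_pow, Real.sq_sqrt harg]
      have : (cseq n + 8) / cseq n * m n ^ 2 ≤ m (n+1) ^ 2 := by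
        rw [← h3]; exact h2
      calc (cseq n + 8) * m n ^ 2 = cseq n * ((cseq n + 8) / cseq n * m n ^ 2) := by
            field_simp
        _ ≤ cseq n * m (n+1) ^ 2 := by nlinarith
    -- P ≥ 0
    have hP : 0 ≤ cseq n * (φ ^ 2 - m (n+1) ^ 2) ^ 2
        + 8 * ((φ ^ 2) ^ 2 - m (n+1) ^ 2 * m n ^ 2) := by
      nlinarith [sq_nonneg ((cseq n + 8) * φ ^ 2 - cseq n * m (n+1) ^ 2),
        mul_nonneg (sq_nonneg (m (n+1)))
          (by linarith : (0:ℝ) ≤ cseq n * m (n+1) ^ 2 - (cseq n + 8) * m n ^ 2),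
        sq_nonneg φ, hc.le]
    -- sum lower bound
    have hsum : ((φ ^ 2) ^ 2 - m (n+1) ^ 2 * m n ^ 2) * R4n n m φ
        ≤ ∑ k ∈ Finset.Icc 1 n,
            ((φ ^ 2) ^ 2 - m (n+1) ^ 2 * m k ^ 2) *
              ∏ l ∈ (Finset.Icc 1 n).erase k, (φ ^ 2 - m l ^ 2) ^ 2 := by
      unfold R4n
      rw [Finset.mul_sum]
      refine Finset.sum_le_sum fun k hk => ?_
      have hk' := Finset.mem_Icc.mp hk
      have h1 : m k ≤ m n := hmlen k hk'.1 hk'.2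
      have h2 : 0 < m k := hmpos k hk'.1 (by omega)
      have h3 : m k ^ 2 ≤ m n ^ 2 := by nlinarith
      have h4 : (φ ^ 2) ^ 2 - m (n+1) ^ 2 * m n ^ 2
          ≤ (φ ^ 2) ^ 2 - m (n+1) ^ 2 * m k ^ 2 := by nlinarith [sq_nonneg (m (n+1))]
      exact mul_le_mul_of_nonneg_right h4 (prod_sq_nonneg _ _ _)
    -- assemble
    have hR := R4n_nonneg n m φ
    have hPi := prod_sq_nonneg (Finset.Icc 1 n) m φ
    have hchalf := cseq_le_half hn
    have hcsucc := cseq_succ (by omega : 1 ≤ n)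
    rw [U4n_rec, R4n_rec, hcsucc]
    nlinarith [mul_le_mul_of_nonneg_left hIH (sq_nonneg (φ ^ 2 - m (n+1) ^ 2)),
      mul_nonneg hP hR, hsum, hPi, hR, hc.le, hchalf,
      mul_nonneg hc.le hPi]

end Phi4nAux

theorem phi4n_inductive_inequality :
    ∃ lam c : ℕ → ℝ,
      Real.sqrt 5 < lam 1 ∧
      (∀ j, 1 ≤ j → 1 < lam j) ∧
      (∀ j, 2 ≤ j → 0 < c j) ∧
      (∀ j, 2 ≤ j → lam j = Real.sqrt ((c j + 8) / c j)) ∧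
      (∀ j, 2 ≤ j → c (j + 1) = min 1 (c j / 2)) ∧
      ∀ n, 2 ≤ n → ∀ m : ℕ → ℝ,
        0 < m 1 →
        (∀ j, 1 ≤ j → j < n → m j < m (j + 1)) →
        (∀ j, 1 ≤ j → j < n → lam j * m j ≤ m (j + 1)) →
        ∀ φ : ℝ, 0 ≤ φ → c n * R4n n m φ ≤ U4n n m φ := by
  refine ⟨Phi4nAux.lamseq, Phi4nAux.cseq, Phi4nAux.sqrt5_lt_lam1,
    fun j hj => Phi4nAux.one_lt_lamseq hj,
    fun j _ => Phi4nAux.cseq_pos j,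
    fun j hj => Phi4nAux.lamseq_ge_two hj,
    fun j hj => Phi4nAux.cseq_rec hj,
    Phi4nAux.main_ineq⟩
end
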